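/- Theorem (distinguished generating subgroups of the group of a power complex, Theorem 4.2). Let 𝒦 be a family of subsets of V with ∅ ∈ 𝒦, and let ∅ = C_{-1} ⊊ C_0 ⊊ C_1 ⊊ ⋯ ⊊ C_k be a maximal chain in (𝒦, ⊆) whose smallest nonempty member C_0 = {x₀} is a singleton. Fix a ∈ N and let ā : V → N be the constant function with value a, so that the base flag of n^𝒦 is the chain {ā} = C_{-1}(ā) ⊊ C_0(ā) ⊊ ⋯ ⊊ C_k(ā) in (ℱ, ⊆). For −1 ≤ j ≤ k let R_j := {φ ∈ Aut(𝒦) : φ(C_m) = C_m for all m ≠ j} (so R_{−1} is the stabilizer of the whole chain in Aut(𝒦)). Then, inside the wreath product S_n ≀ Aut(𝒦) acting on subsets of V → N via (σ,φ) ↦ θ_{σ,φ}: (a) the subgroup of elements mapping every face C_j(ā) (−1 ≤ j ≤ k) onto itself equals {(σ,φ) : φ ∈ R_{−1} and σ_i(a) = a for all i ∈ V}, which is isomorphic to S_{n−1} ≀ R_{−1}; (b) the subgroup of elements mapping every face C_j(ā) with 0 ≤ j ≤ k onto itself (the vertex {ā} being unconstrained) equals {(σ,φ) : φ ∈ R_{−1}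 and σ_i(a) = a for all i ∈ V with i ≠ x₀}, which is isomorphic to (S_n × S_{n−1}^{v−1}) ⋊ R_{−1}; (c) for each 1 ≤ m ≤ k, the subgroup of elements mapping every face C_j(ā) with j ≠ m−1 onto itself (including the vertex {ā}) equals {(σ,φ) : φ ∈ R_{m−1} and σ_i(a) = a for all i ∈ V}, which is isomorphic to S_{n−1} ≀ R_{m−1}. -/

import Mathlib

/-!
Since `n ≥ 2`, a face `F(ε)` of `n^𝒦` determines both `F` and the values of `ε` off `F`, and
`θ_{σ,φ}` maps `F(ā)` to the face `φ(F)(δ)` with `δ i = σ_{φ⁻¹ i}(a)`. Hence `θ_{σ,φ}` fixes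
`F(ā)` exactly when `φ(F) = F` and `σ_i(a) = a` for every `i ∉ F`. Fixing the vertex
`{ā} = ∅(ā)` thus forces `σ_i(a) = a` for all `i`, while fixing all `C_j(ā)` with `j ≥ 0` only
forces it off `C_0 = {x₀}`, the common vertex of all `C_j`. The isomorphisms restrict each `σ_i`
fixing `a` to `N ∖ {a}`.
-/

/-- The face `F(ε)` of the power complex. -/
def face (n v : ℕ) (F : Set (Fin v)) (ε : Fin v → Fin n) : Set (Fin v → Fin n) :=
  {η | ∀ i ∉ F, η i = ε i}

/-- The power complex `n^𝒦`, as a family of subsets of `V → N`. -/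
def powerComplex (n v : ℕ) (𝒦 : Set (Set (Fin v))) : Set (Set (Fin v → Fin n)) :=
  {A | ∃ F ∈ 𝒦, ∃ ε : Fin v → Fin n, A = face n v F ε}

/-- The automorphism group `Aut(𝒦)` of the complex `𝒦`: all permutations `φ` of the vertex
set such that `F ∈ 𝒦 ↔ φ(F) ∈ 𝒦` for every subset `F`. -/
def AutK (v : ℕ) (𝒦 : Set (Set (Fin v))) : Subgroup (Equiv.Perm (Fin v)) where
  carrier := {φ | ∀ F : Set (Fin v), F ∈ 𝒦 ↔ φ '' F ∈ 𝒦}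
  one_mem' := by intro F; simp
  mul_mem' := by
    intro φ ψ hφ hψ F
    have h : ⇑(φ * ψ) '' F = φ '' (ψ '' F) := by
      rw [← Set.image_comp]; rfl
    rw [h]
    exact (hψ F).trans (hφ (ψ '' F))
  inv_mem' := by
    intro φ hφ F
    have h := hφ (⇑(φ⁻¹) '' F)
    have h2 : ⇑φ '' (⇑(φ⁻¹) '' F) = F := by ext x; simp
    rw [h2] at h
    exact h.symm

/-- The permutation `θ_{σ,φ}` of `V → N`, `θ_{σ,φ}(η) i = σ_{φ⁻¹ i}(η (φ⁻¹ i))`. -/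
def theta {n v : ℕ} (σ : Fin v → Equiv.Perm (Fin n)) (φ : Equiv.Perm (Fin v)) :
    Equiv.Perm (Fin v → Fin n) where
  toFun η i := σ (φ⁻¹ i) (η (φ⁻¹ i))
  invFun η i := (σ i)⁻¹ (η (φ i))
  left_inv η := by funext i; simp
  right_inv η := by funext i; simp

/-- The coordinate-permuting action on a direct power of a group: `(φ·σ)_i = σ_{φ⁻¹ i}`. -/
def permPi (v : ℕ) (G : Type*) [Group G] : Equiv.Perm (Fin v) →* MulAut (Fin v → G) where
  toFun φ :=
    { toFun := fun σ i => σ (φ⁻¹ i)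
      invFun := fun σ i => σ (φ i)
      left_inv := fun σ => by funext i; simp
      right_inv := fun σ => by funext i; simp
      map_mul' := fun σ τ => rfl }
  map_one' := by ext σ i; simp
  map_mul' := fun φ ψ => by ext σ i; simp [mul_inv_rev]

/-- The wreath product `S_n ≀ Aut(𝒦) = (∏_{i ∈ V} S_n) ⋊ Aut(𝒦)`. -/
abbrev Wreath (n v : ℕ) (𝒦 : Set (Set (Fin v))) :=
  (Fin v → Equiv.Perm (Fin n)) ⋊[(permPi v (Equiv.Perm (Fin n))).comp (AutK v 𝒦).subtype]
    (AutK v 𝒦)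

/-- `C` is a maximal chain of the family `S` partially ordered by inclusion. -/
def IsMaxChainIn {α : Type*} (S : Set (Set α)) (C : Set (Set α)) : Prop :=
  C ⊆ S ∧ IsChain (· ⊆ ·) C ∧
    ∀ C' : Set (Set α), C' ⊆ S → IsChain (· ⊆ ·) C' → C ⊆ C' → C' = C

/-- The subgroup of permutations of `V` mapping each member of the family `S` onto itself. -/
def setStab (v : ℕ) (S : Set (Set (Fin v))) : Subgroup (Equiv.Perm (Fin v)) where
  carrier := {φ | ∀ A ∈ S, φ '' A = A}
  one_mem' := by intro A _; simp
  mul_mem' := by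
    intro φ ψ hφ hψ A hA
    have h : ⇑(φ * ψ) '' A = φ '' (ψ '' A) := by rw [← Set.image_comp]; rfl
    rw [h, hψ A hA, hφ A hA]
  inv_mem' := by
    intro φ hφ A hA
    have h := hφ A hA
    calc ⇑φ⁻¹ '' A = ⇑φ⁻¹ '' (⇑φ '' A) := by rw [h]
    _ = A := by ext x; simp

/-- The subgroup `R_{−1}`: the stabilizer of the whole base chain `C` in `Aut(𝒦)`. -/
def Rminus (n v k : ℕ) (𝒦 : Set (Set (Fin v))) (C : Fin (k + 1) → Set (Fin v)) :
    Subgroup (Equiv.Perm (Fin v)) :=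
  AutK v 𝒦 ⊓ setStab v (Set.range C)

/-- The subgroup `R_t`: the elements of `Aut(𝒦)` mapping `C_m` onto itself for all `m ≠ t`. -/
def Rsub (n v k : ℕ) (𝒦 : Set (Set (Fin v))) (C : Fin (k + 1) → Set (Fin v))
    (t : Fin (k + 1)) : Subgroup (Equiv.Perm (Fin v)) :=
  AutK v 𝒦 ⊓ setStab v {A | ∃ j : Fin (k + 1), j ≠ t ∧ A = C j}

/-- The subgroup `{(σ, φ) : σ_i(a) = a for all i}` of the wreath product. -/
def sigmaFix (n v : ℕ) (𝒦 : Set (Set (Fin v))) (a : Fin n) : Subgroup (Wreath n v 𝒦) where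
  carrier := {p | ∀ i, p.left i a = a}
  one_mem' := by intro i; simp [SemidirectProduct.one_left]
  mul_mem' := by
    intro p q hp hq i
    have h : (p * q).left i = p.left i * q.left ((p.right : Equiv.Perm (Fin v))⁻¹ i) := rfl
    rw [h, Equiv.Perm.mul_apply, hq _, hp i]
  inv_mem' := by
    intro p hp i
    have h : (p⁻¹).left i = (p.left ((p.right : Equiv.Perm (Fin v)) i))⁻¹ := rfl
    rw [h]
    exact (Equiv.Perm.inv_eq_iff_eq).mpr (hp _).symm

/-- The subgroup (a): `{(σ,φ) : φ ∈ R_{−1}, σ_i(a) = a for all i}` of the wreath product. -/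
def Wa (n v k : ℕ) (𝒦 : Set (Set (Fin v))) (C : Fin (k + 1) → Set (Fin v)) (a : Fin n) :
    Subgroup (Wreath n v 𝒦) :=
  sigmaFix n v 𝒦 a ⊓
    Subgroup.comap ((AutK v 𝒦).subtype.comp SemidirectProduct.rightHom) (Rminus n v k 𝒦 C)

/-- The subgroup (c): `{(σ,φ) : φ ∈ R_t, σ_i(a) = a for all i}` of the wreath product. -/
def Wc (n v k : ℕ) (𝒦 : Set (Set (Fin v))) (C : Fin (k + 1) → Set (Fin v)) (a : Fin n)
    (t : Fin (k + 1)) : Subgroup (Wreath n v 𝒦) :=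
  sigmaFix n v 𝒦 a ⊓
    Subgroup.comap ((AutK v 𝒦).subtype.comp SemidirectProduct.rightHom) (Rsub n v k 𝒦 C t)

/-- The stabilizer of the base vertex `x₀` in the permutation group of `V`. -/
def stabx (v : ℕ) (x₀ : Fin v) : Subgroup (Equiv.Perm (Fin v)) :=
  MulAction.stabilizer (Equiv.Perm (Fin v)) x₀

lemma stabx_apply {v : ℕ} {x₀ : Fin v} (ψ : stabx v x₀) : (ψ : Equiv.Perm (Fin v)) x₀ = x₀ :=
  ψ.2

lemma stabx_inv_ne {v : ℕ} {x₀ : Fin v} (ψ : stabx v x₀) {i : Fin v} (hi : i ≠ x₀) :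
    (ψ : Equiv.Perm (Fin v))⁻¹ i ≠ x₀ := by
  intro h
  apply hi
  have := congrArg (ψ : Equiv.Perm (Fin v)) h
  simpa [stabx_apply] using this

lemma stabx_app_ne {v : ℕ} {x₀ : Fin v} (ψ : stabx v x₀) {i : Fin v} (hi : i ≠ x₀) :
    (ψ : Equiv.Perm (Fin v)) i ≠ x₀ := by
  intro h
  exact hi ((ψ : Equiv.Perm (Fin v)).injective (h.trans (stabx_apply ψ).symm))

/-- The subgroup `S_n × S_{n−1}^{v−1}` of `∏_{i ∈ V} S_n`:
the tuples `σ` with `σ_i(a) = a` for all `i ≠ x₀`. -/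
def Pgrp (n v : ℕ) (x₀ : Fin v) (a : Fin n) : Subgroup (Fin v → Equiv.Perm (Fin n)) where
  carrier := {σ | ∀ i, i ≠ x₀ → σ i a = a}
  one_mem' := fun i _ => rfl
  mul_mem' := by
    intro σ τ hσ hτ i hi
    rw [Pi.mul_apply, Equiv.Perm.mul_apply, hτ i hi, hσ i hi]
  inv_mem' := by
    intro σ hσ i hi
    rw [Pi.inv_apply]
    exact (Equiv.Perm.inv_eq_iff_eq).mpr (hσ i hi).symm

/-- The coordinate-permuting action of the stabilizer of `x₀` on `S_n × S_{n−1}^{v−1}`. -/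
def actb (n v : ℕ) (x₀ : Fin v) (a : Fin n) :
    stabx v x₀ →* MulAut (Pgrp n v x₀ a) where
  toFun ψ :=
    { toFun := fun σ => ⟨fun i => σ.1 ((ψ : Equiv.Perm (Fin v))⁻¹ i),
        fun i hi => σ.2 _ (stabx_inv_ne ψ hi)⟩
      invFun := fun σ => ⟨fun i => σ.1 ((ψ : Equiv.Perm (Fin v)) i),
        fun i hi => σ.2 _ (stabx_app_ne ψ hi)⟩
      left_inv := fun σ => Subtype.ext (funext fun i => by simp)
      right_inv := fun σ => Subtype.ext (funext fun i => by simp)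
      map_mul' := fun σ τ => rfl }
  map_one' := by
    ext σ i
    simp
  map_mul' := fun ψ₁ ψ₂ => by
    ext σ i
    simp [mul_inv_rev]

lemma Rminus_le_stabx (n v k : ℕ) (𝒦 : Set (Set (Fin v))) (C : Fin (k + 1) → Set (Fin v))
    (x₀ : Fin v) (hC0 : C 0 = {x₀}) : Rminus n v k 𝒦 C ≤ stabx v x₀ := by
  intro φ hφ
  have h := hφ.2 (C 0) ⟨0, rfl⟩
  rw [hC0, Set.image_singleton, Set.singleton_eq_singleton_iff] at h
  exact h

/-- The subgroup (b): `{(σ,φ) : φ ∈ R_{−1}, σ_i(a) = a for all i ≠ x₀}` of the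
wreath product. -/
def Wb (n v k : ℕ) (𝒦 : Set (Set (Fin v))) (C : Fin (k + 1) → Set (Fin v)) (x₀ : Fin v)
    (a : Fin n) (hC0 : C 0 = {x₀}) : Subgroup (Wreath n v 𝒦) where
  carrier := {p | (p.right : Equiv.Perm (Fin v)) ∈ Rminus n v k 𝒦 C ∧
    ∀ i, i ≠ x₀ → p.left i a = a}
  one_mem' := by
    refine ⟨?_, fun i _ => rfl⟩
    exact (Rminus n v k 𝒦 C).one_mem
  mul_mem' := by
    rintro p q ⟨hp1, hp2⟩ ⟨hq1, hq2⟩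
    refine ⟨?_, fun i hi => ?_⟩
    · exact (Rminus n v k 𝒦 C).mul_mem hp1 hq1
    · have h : (p * q).left i = p.left i * q.left ((p.right : Equiv.Perm (Fin v))⁻¹ i) := rfl
      rw [h, Equiv.Perm.mul_apply,
        hq2 _ (stabx_inv_ne ⟨_, Rminus_le_stabx n v k 𝒦 C x₀ hC0 hp1⟩ hi), hp2 i hi]
  inv_mem' := by
    rintro p ⟨hp1, hp2⟩
    refine ⟨(Rminus n v k 𝒦 C).inv_mem hp1, fun i hi => ?_⟩
    have h : (p⁻¹).left i = (p.left ((p.right : Equiv.Perm (Fin v)) i))⁻¹ := rfl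
    rw [h]
    exact (Equiv.Perm.inv_eq_iff_eq).mpr
      (hp2 _ (stabx_app_ne ⟨_, Rminus_le_stabx n v k 𝒦 C x₀ hC0 hp1⟩ hi)).symm

/-- The wreath product `S_{n−1} ≀ H` for a subgroup `H` of permutations of `V`, where
`S_{n−1}` is the group of permutations of `N` fixing the point `a`. -/
abbrev SmallWreath (n v : ℕ) (a : Fin n) (H : Subgroup (Equiv.Perm (Fin v))) :=
  (Fin v → Equiv.Perm {x : Fin n // x ≠ a})
    ⋊[(permPi v (Equiv.Perm {x : Fin n // x ≠ a})).comp H.subtype] H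

section Faces

variable {n v : ℕ}

lemma theta_image_face (σ : Fin v → Equiv.Perm (Fin n)) (φ : Equiv.Perm (Fin v))
    (F : Set (Fin v)) (ε : Fin v → Fin n) :
    theta σ φ '' face n v F ε = face n v (φ '' F) (fun i => σ (φ⁻¹ i) (ε (φ⁻¹ i))) := by
  ext ζ
  constructor
  · rintro ⟨η, hη, rfl⟩ i hi
    have h : φ⁻¹ i ∉ F := fun h => hi ⟨φ⁻¹ i, h, by simp⟩
    show σ (φ⁻¹ i) (η (φ⁻¹ i)) = _
    rw [hη _ h]
  · intro hζ
    refine ⟨(theta σ φ).symm ζ, fun i hi => ?_, (theta σ φ).apply_symm_apply ζ⟩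
    show (σ i)⁻¹ (ζ (φ i)) = ε i
    rw [hζ _ (by rwa [φ.injective.mem_set_image])]
    simp

lemma face_subset_face_iff (hn : 2 ≤ n) {F G : Set (Fin v)} {ε δ : Fin v → Fin n} :
    face n v F ε ⊆ face n v G δ ↔ F ⊆ G ∧ ∀ i ∉ G, ε i = δ i := by
  constructor
  · intro h
    have hεδ : ∀ i ∉ G, ε i = δ i := h fun _ _ => rfl
    refine ⟨fun i hiF => by_contra fun hiG => ?_, hεδ⟩
    -- changing `ε` at `i ∈ F ∖ G` stays inside `F(ε)` but leaves `G(δ)`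
    have : Nontrivial (Fin n) := Fin.nontrivial_iff_two_le.mpr hn
    obtain ⟨b, hb⟩ := exists_ne (ε i)
    have hupdate : Function.update ε i b ∈ face n v F ε := fun j hj =>
      Function.update_of_ne (fun hji => hj (by rwa [hji])) _ _
    have hb' := h hupdate i hiG
    rw [Function.update_self, ← hεδ i hiG] at hb'
    exact hb hb'
  · rintro ⟨hFG, hεδ⟩ η hη i hi
    exact (hη i fun h => hi (hFG h)).trans (hεδ i hi)

lemma face_eq_face_iff (hn : 2 ≤ n) {F G : Set (Fin v)} {ε δ : Fin v → Fin n} :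
    face n v F ε = face n v G δ ↔ F = G ∧ ∀ i ∉ G, ε i = δ i := by
  rw [subset_antisymm_iff, face_subset_face_iff hn, face_subset_face_iff hn]
  constructor
  · rintro ⟨⟨hFG, hεδ⟩, hGF, -⟩
    exact ⟨subset_antisymm hFG hGF, hεδ⟩
  · rintro ⟨rfl, hεδ⟩
    exact ⟨⟨subset_rfl, hεδ⟩, subset_rfl, fun i hi => (hεδ i hi).symm⟩

lemma theta_image_face_const_eq_iff (hn : 2 ≤ n) (σ : Fin v → Equiv.Perm (Fin n))
    (φ : Equiv.Perm (Fin v)) (F : Set (Fin v)) (a : Fin n) :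
    theta σ φ '' face n v F (fun _ => a) = face n v F (fun _ => a) ↔
      φ '' F = F ∧ ∀ i ∉ F, σ i a = a := by
  rw [theta_image_face, face_eq_face_iff hn]
  refine and_congr_right fun hF => ?_
  rw [← φ.forall_congr_right]
  nth_rw 1 [← hF]
  simp only [φ.injective.mem_set_image, Equiv.Perm.coe_inv, Equiv.symm_apply_apply]

end Faces

section Stabilizers

variable {n v : ℕ} {𝒦 : Set (Set (Fin v))} {a : Fin n}

lemma theta_image_vertex_eq_iff (hn : 2 ≤ n) (σ : Fin v → Equiv.Perm (Fin n))
    (φ : Equiv.Perm (Fin v)) :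
    theta σ φ '' face n v ∅ (fun _ => a) = face n v ∅ (fun _ => a) ↔ ∀ i, σ i a = a := by
  simp [theta_image_face_const_eq_iff hn]

lemma theta_image_vertex_and_faces_eq_iff (hn : 2 ≤ n) (S : Set (Set (Fin v)))
    (p : Wreath n v 𝒦) :
    (theta p.left (p.right : Equiv.Perm (Fin v)) '' face n v ∅ (fun _ => a)
        = face n v ∅ (fun _ => a) ∧
      ∀ A ∈ S, theta p.left (p.right : Equiv.Perm (Fin v)) '' face n v A (fun _ => a)
        = face n v A (fun _ => a)) ↔
    p ∈ sigmaFix n v 𝒦 a ⊓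
      Subgroup.comap ((AutK v 𝒦).subtype.comp SemidirectProduct.rightHom)
        (AutK v 𝒦 ⊓ setStab v S) := by
  simp only [theta_image_vertex_eq_iff hn, theta_image_face_const_eq_iff hn]
  constructor
  · rintro ⟨hσ, hφ⟩
    exact ⟨hσ, p.right.2, fun A hA => (hφ A hA).1⟩
  · rintro ⟨hσ, -, hφ⟩
    exact ⟨hσ, fun A hA => ⟨hφ A hA, fun i _ => hσ i⟩⟩

lemma theta_image_faces_eq_iff_mem_Wb (hn : 2 ≤ n) {k : ℕ} {C : Fin (k + 1) → Set (Fin v)}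
    (hchain : ∀ j j' : Fin (k + 1), j < j' → C j ⊂ C j') {x₀ : Fin v} (hC0 : C 0 = {x₀})
    (p : Wreath n v 𝒦) :
    (∀ j : Fin (k + 1), theta p.left (p.right : Equiv.Perm (Fin v)) ''
        face n v (C j) (fun _ => a) = face n v (C j) (fun _ => a)) ↔
      p ∈ Wb n v k 𝒦 C x₀ a hC0 := by
  have hx₀ (j : Fin (k + 1)) : x₀ ∈ C j := by
    rcases (Fin.zero_le j).eq_or_lt with rfl | hj
    · simp [hC0]
    · exact (hchain 0 j hj).subset (by simp [hC0])
  simp only [theta_image_face_const_eq_iff hn, forall_and]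
  refine and_congr ?_ ?_
  · exact ⟨fun hφ => ⟨p.right.2, Set.forall_mem_range.2 hφ⟩,
      fun hφ => Set.forall_mem_range.1 hφ.2⟩
  · exact ⟨fun hσ i hi => hσ 0 i (by simpa [hC0]),
      fun hσ j i hi => hσ i fun hix => hi (hix ▸ hx₀ j)⟩

end Stabilizers

section Isomorphisms

variable {n v : ℕ} {𝒦 : Set (Set (Fin v))}

def sigmaFixInfComapEquivSmallWreath (a : Fin n) (H : Subgroup (Equiv.Perm (Fin v)))
    (hH : H ≤ AutK v 𝒦) :
    ↥(sigmaFix n v 𝒦 a ⊓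
      Subgroup.comap ((AutK v 𝒦).subtype.comp SemidirectProduct.rightHom) H) ≃*
      SmallWreath n v a H where
  toFun p :=
    ⟨fun i => (p.1.left i).subtypePerm fun _ => (p.1.left i).injective.ne_iff' (p.2.1 i),
      ⟨p.1.right, p.2.2⟩⟩
  invFun q :=
    ⟨⟨fun i => Equiv.Perm.ofSubtype (q.left i), ⟨q.right, hH q.right.2⟩⟩,
      fun i => Equiv.Perm.ofSubtype_apply_of_not_mem _ (by simp), q.right.2⟩
  left_inv p := Subtype.ext <| SemidirectProduct.ext
    (funext fun i => Equiv.Perm.ofSubtype_subtypePerm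
      (fun _ => (p.1.left i).injective.ne_iff' (p.2.1 i)) fun _ hx hxa => hx (hxa ▸ p.2.1 i)) rfl
  right_inv q := SemidirectProduct.ext (funext fun i => Equiv.Perm.subtypePerm_ofSubtype _) rfl
  map_mul' _ _ := SemidirectProduct.ext (funext fun _ => Equiv.ext fun _ => Subtype.ext rfl) rfl

def wbEquivSemidirectProduct (k : ℕ) (C : Fin (k + 1) → Set (Fin v)) (x₀ : Fin v)
    (a : Fin n) (hC0 : C 0 = {x₀}) :
    Wb n v k 𝒦 C x₀ a hC0 ≃*
      (Pgrp n v x₀ a ⋊[(actb n v x₀ a).comp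
        (Subgroup.inclusion (Rminus_le_stabx n v k 𝒦 C x₀ hC0))] (Rminus n v k 𝒦 C)) where
  toFun p := ⟨⟨p.1.left, p.2.2⟩, ⟨p.1.right, p.2.1⟩⟩
  invFun q := ⟨⟨q.left.1, ⟨q.right.1, q.right.2.1⟩⟩, q.right.2, q.left.2⟩
  left_inv _ := rfl
  right_inv _ := rfl
  map_mul' _ _ := rfl

end Isomorphisms

theorem distinguished_generating_subgroups (n v k : ℕ) (hn : 2 ≤ n)
    (𝒦 : Set (Set (Fin v))) (C : Fin (k + 1) → Set (Fin v))
    (hchain : ∀ j j' : Fin (k + 1), j < j' → C j ⊂ C j')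
    (x₀ : Fin v) (hC0 : C 0 = {x₀}) (a : Fin n) :
    ((∀ p : Wreath n v 𝒦,
        (theta p.left (p.right : Equiv.Perm (Fin v)) '' face n v ∅ (fun _ => a)
            = face n v ∅ (fun _ => a) ∧
          ∀ j : Fin (k + 1), theta p.left (p.right : Equiv.Perm (Fin v)) ''
              face n v (C j) (fun _ => a) = face n v (C j) (fun _ => a))
          ↔ p ∈ Wa n v k 𝒦 C a) ∧
      Nonempty (Wa n v k 𝒦 C a ≃* SmallWreath n v a (Rminus n v k 𝒦 C))) ∧
    ((∀ p : Wreath n v 𝒦,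
        (∀ j : Fin (k + 1), theta p.left (p.right : Equiv.Perm (Fin v)) ''
            face n v (C j) (fun _ => a) = face n v (C j) (fun _ => a))
          ↔ p ∈ Wb n v k 𝒦 C x₀ a hC0) ∧
      Nonempty (Wb n v k 𝒦 C x₀ a hC0 ≃*
        (Pgrp n v x₀ a ⋊[(actb n v x₀ a).comp
          (Subgroup.inclusion (Rminus_le_stabx n v k 𝒦 C x₀ hC0))] (Rminus n v k 𝒦 C)))) ∧
    (∀ t : Fin (k + 1), (t : ℕ) < k →
      (∀ p : Wreath n v 𝒦,
        (theta p.left (p.right : Equiv.Perm (Fin v)) '' face n v ∅ (fun _ => a)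
            = face n v ∅ (fun _ => a) ∧
          ∀ j : Fin (k + 1), j ≠ t → theta p.left (p.right : Equiv.Perm (Fin v)) ''
              face n v (C j) (fun _ => a) = face n v (C j) (fun _ => a))
          ↔ p ∈ Wc n v k 𝒦 C a t) ∧
      Nonempty (Wc n v k 𝒦 C a t ≃* SmallWreath n v a (Rsub n v k 𝒦 C t))) := by
  refine ⟨⟨fun p => ?_, ⟨sigmaFixInfComapEquivSmallWreath a _ inf_le_left⟩⟩,
    ⟨theta_image_faces_eq_iff_mem_Wb hn hchain hC0,
      ⟨wbEquivSemidirectProduct k C x₀ a hC0⟩⟩,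
    fun t _ => ⟨fun p => ?_, ⟨sigmaFixInfComapEquivSmallWreath a _ inf_le_left⟩⟩⟩
  · refine (and_congr_right' ?_).trans (theta_image_vertex_and_faces_eq_iff hn (Set.range C) p)
    rw [Set.forall_mem_range]
  · refine (and_congr_right' ?_).trans
      (theta_image_vertex_and_faces_eq_iff hn {A | ∃ j, j ≠ t ∧ A = C j} p)
    exact ⟨fun h A ⟨j, hj, hA⟩ => hA ▸ h j hj, fun h j hj => h _ ⟨j, hj, rfl⟩⟩
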